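/- Let G be a finite simple graph on a vertex type V and let s be a subset of V. If G is ħ-perfect, then the induced subgraph of G on s is ħ-perfect. -/

import Mathlib

open Matrix

/-- A realization of the graph `G` in dimension `d`: a family of Hermitian involutions that
anticommute on edges and commute on non-edges. -/
def IsRealization {V : Type*} (G : SimpleGraph V) (d : ℕ)
    (S : V → Matrix (Fin d) (Fin d) ℂ) : Prop :=
  (∀ i, (S i).IsHermitian) ∧ (∀ i, S i * S i = 1) ∧
    (∀ i j, G.Adj i j → S i * S j = -(S j * S i)) ∧
    (∀ i j, i ≠ j → ¬G.Adj i j → S i * S j = S j * S i)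

/-- The (real) expectation value `ψᴴ A ψ` of a matrix `A` at a vector `ψ`. -/
noncomputable def expectation {d : ℕ} (A : Matrix (Fin d) (Fin d) ℂ) (ψ : Fin d → ℂ) : ℝ :=
  (star ψ ⬝ᵥ (A *ᵥ ψ)).re

/-- The beta value of a realization: supremum over unit vectors of the weighted sum of squared
expectations. -/
noncomputable def betaVal {V : Type*} [Fintype V] {d : ℕ}
    (S : V → Matrix (Fin d) (Fin d) ℂ) (w : V → ℝ) : ℝ :=
  sSup {r : ℝ | ∃ ψ : Fin d → ℂ, star ψ ⬝ᵥ ψ = 1 ∧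
    r = ∑ i, w i * (expectation (S i) ψ) ^ 2}

/-- A finite set of vertices is independent if no two of its members are adjacent. -/
def IsIndepSet {V : Type*} (G : SimpleGraph V) (I : Finset V) : Prop :=
  ∀ a ∈ I, ∀ b ∈ I, ¬G.Adj a b

/-- The weighted independence number. -/
noncomputable def alphaW {V : Type*} [Fintype V] (G : SimpleGraph V) (w : V → ℝ) : ℝ :=
  sSup {r : ℝ | ∃ I : Finset V, IsIndepSet G I ∧ r = ∑ i ∈ I, w i}

/-- A graph is ħ-perfect if for every realization and every nonnegative weight vector the beta
value equals the weighted independence number. -/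
def HbarPerfect {V : Type*} [Fintype V] (G : SimpleGraph V) : Prop :=
  ∀ d : ℕ, 1 ≤ d → ∀ S : V → Matrix (Fin d) (Fin d) ℂ, IsRealization G d S →
    ∀ w : V → ℝ, (∀ i, 0 ≤ w i) → betaVal S w = alphaW G w

/-!
An independent set of vertices carries pairwise commuting involutions, which have a common
`±1`-eigenvector; there every one of them has squared expectation `1`, so `α(G, w) ≤ β_S(w)` for
every realization `S` of every graph.

For the reverse inequality on `G[s]`, extend a realization of `G[s]` to a realization of `G` one
vertex `u ∉ s` at a time, by tensoring with a qubit: `u` acts as `1 ⊗ σ_X`, and every other vertex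
`v` as `T v ⊗ σ_Z` or `T v ⊗ 1` according as `v` is or is not adjacent to `u`. Since `σ_Z` and
`σ_X` anticommute, this realizes one more vertex, and since `σ_Z e₀ = e₀` the states `ψ ⊗ e₀` keep
all old expectations. With `w'` the extension of `w` by zero this gives
`β_S(w) ≤ β_T(w') = α(G, w') = α(G[s], w)`.
-/

namespace Matrix

open Kronecker

variable {α : Type*}

def pauliX : Matrix (Fin 2) (Fin 2) ℂ := !![0, 1; 1, 0]

def pauliZ : Matrix (Fin 2) (Fin 2) ℂ := !![1, 0; 0, -1]

lemma isHermitian_pauliX : pauliX.IsHermitian := by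
  ext i j; fin_cases i <;> fin_cases j <;> simp [pauliX]

lemma isHermitian_pauliZ : pauliZ.IsHermitian := by
  ext i j; fin_cases i <;> fin_cases j <;> simp [pauliZ]

lemma pauliX_mul_self : pauliX * pauliX = 1 := by
  ext i j; fin_cases i <;> fin_cases j <;> simp [pauliX]

lemma pauliZ_mul_self : pauliZ * pauliZ = 1 := by
  ext i j; fin_cases i <;> fin_cases j <;> simp [pauliZ]

lemma pauliZ_mul_pauliX : pauliZ * pauliX = -(pauliX * pauliZ) := by
  ext i j; fin_cases i <;> fin_cases j <;> simp [pauliX, pauliZ]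

lemma commute_ite_pauliZ (p q : Prop) [Decidable p] [Decidable q] :
    Commute (if p then pauliZ else 1) (if q then pauliZ else 1) := by
  split_ifs <;> simp

lemma neg_kronecker {l m n p : Type*} [Mul α] [HasDistribNeg α] (A : Matrix l m α)
    (B : Matrix n p α) : (-A) ⊗ₖ B = -(A ⊗ₖ B) := by
  ext; simp

lemma kronecker_neg {l m n p : Type*} [Mul α] [HasDistribNeg α] (A : Matrix l m α)
    (B : Matrix n p α) : A ⊗ₖ (-B) = -(A ⊗ₖ B) := by
  ext; simp

lemma IsHermitian.kronecker {m n : Type*} [CommMagma α] [StarMul α] {A : Matrix m m α}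
    {B : Matrix n n α} (hA : A.IsHermitian) (hB : B.IsHermitian) : (A ⊗ₖ B).IsHermitian := by
  rw [IsHermitian, conjTranspose_kronecker, hA.eq, hB.eq]

variable {m n : Type*} [Fintype m] [Fintype n]

lemma kronecker_mulVec_tmul [CommSemiring α] (A : Matrix m m α) (B : Matrix n n α) (ψ : m → α)
    (φ : n → α) :
    (A ⊗ₖ B) *ᵥ (fun x : m × n => ψ x.1 * φ x.2) = fun x => (A *ᵥ ψ) x.1 * (B *ᵥ φ) x.2 := by
  ext x
  simp only [mulVec, dotProduct, kroneckerMap_apply, Fintype.sum_prod_type, Finset.sum_mul_sum]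
  exact Finset.sum_congr rfl fun _ _ => Finset.sum_congr rfl fun _ _ => by ring

lemma dotProduct_tmul [CommSemiring α] (a c : m → α) (b f : n → α) :
    (fun x : m × n => a x.1 * b x.2) ⬝ᵥ (fun x => c x.1 * f x.2) = (a ⬝ᵥ c) * (b ⬝ᵥ f) := by
  simp only [dotProduct, Fintype.sum_prod_type, Finset.sum_mul_sum]
  exact Finset.sum_congr rfl fun _ _ => Finset.sum_congr rfl fun _ _ => by ring

lemma star_dotProduct_kronecker_mulVec [CommSemiring α] [StarRing α] (A : Matrix m m α)
    (B : Matrix n n α) (ψ : m → α) (φ : n → α) :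
    star ((fun x => ψ x.1 * φ x.2) : m × n → α) ⬝ᵥ ((A ⊗ₖ B) *ᵥ fun x => ψ x.1 * φ x.2) =
      (star ψ ⬝ᵥ (A *ᵥ ψ)) * (star φ ⬝ᵥ (B *ᵥ φ)) := by
  rw [kronecker_mulVec_tmul, ← dotProduct_tmul]
  congr 1
  ext x
  exact star_mul' _ _

lemma star_dotProduct_reindex_mulVec [CommSemiring α] [StarRing α] (e : m ≃ n)
    (A : Matrix m m α) (ψ : m → α) :
    star (ψ ∘ e.symm) ⬝ᵥ (reindex e e A *ᵥ (ψ ∘ e.symm)) = star ψ ⬝ᵥ (A *ᵥ ψ) := by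
  rw [reindex_apply, submatrix_mulVec_equiv, ← comp_equiv_symm_dotProduct]
  simp [Function.comp_def, star]

end Matrix

open Kronecker

section JointEigenvector

lemma exists_ne_zero_forall_mulVec_eq_or_eq_neg {R n ι : Type*} [Ring R] [Nontrivial R]
    [Fintype n] [Nonempty n] [DecidableEq n] (S : ι → Matrix n n R) (I : Finset ι)
    (hsq : ∀ i ∈ I, S i * S i = 1) (hcomm : ∀ i ∈ I, ∀ j ∈ I, S i * S j = S j * S i) :
    ∃ ψ : n → R, ψ ≠ 0 ∧ ∀ i ∈ I, S i *ᵥ ψ = ψ ∨ S i *ᵥ ψ = -ψ := by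
  classical
  induction I using Finset.induction with
  | empty => exact ⟨fun _ => 1, Function.ne_iff.2 ⟨Classical.arbitrary n, one_ne_zero⟩, by simp⟩
  | @insert a I ha IH =>
    obtain ⟨ψ, hψ, hev⟩ := IH (fun i hi => hsq i (Finset.mem_insert_of_mem hi))
      (fun i hi j hj => hcomm i (Finset.mem_insert_of_mem hi) j (Finset.mem_insert_of_mem hj))
    by_cases hneg : S a *ᵥ ψ = -ψ
    · exact ⟨ψ, hψ, Finset.forall_mem_insert _ _ _ |>.2 ⟨Or.inr hneg, hev⟩⟩
    -- otherwise `ψ + S a ψ` is a nonzero `+1`-eigenvector of `S a`, still a joint eigenvector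
    refine ⟨ψ + S a *ᵥ ψ, fun h => hneg (eq_neg_of_add_eq_zero_right h), ?_⟩
    rw [Finset.forall_mem_insert]
    refine ⟨Or.inl ?_, fun i hi => ?_⟩
    · rw [mulVec_add, mulVec_mulVec, hsq a (Finset.mem_insert_self a I), one_mulVec, add_comm]
    · have hcomm_ai : S i *ᵥ (S a *ᵥ ψ) = S a *ᵥ (S i *ᵥ ψ) := by
        rw [mulVec_mulVec, mulVec_mulVec,
          hcomm i (Finset.mem_insert_of_mem hi) a (Finset.mem_insert_self a I)]
      rcases hev i hi with h | h
      · left; rw [mulVec_add, hcomm_ai, h]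
      · right; rw [mulVec_add, hcomm_ai, h, mulVec_neg, neg_add]

end JointEigenvector

section Expectation

open scoped ComplexOrder

lemma exists_normalizing_smul {n : Type*} [Fintype n] {ψ : n → ℂ} (hψ : ψ ≠ 0) :
    ∃ c : ℂ, star (c • ψ) ⬝ᵥ (c • ψ) = 1 := by
  obtain ⟨r, hr, hψr⟩ := RCLike.pos_iff_exists_ofReal.1 (dotProduct_star_self_pos_iff.2 hψ)
  refine ⟨((√r)⁻¹ : ℝ), ?_⟩
  rw [star_smul, smul_dotProduct, dotProduct_smul, smul_smul, smul_eq_mul, ← hψr]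
  rw [Complex.star_def, Complex.conj_ofReal, ← Complex.ofReal_mul, ← mul_inv,
    Real.mul_self_sqrt hr.le]
  simp [hr.ne']

variable {d : ℕ}

lemma expectation_sq_le_one {A : Matrix (Fin d) (Fin d) ℂ} (hA : A.IsHermitian)
    (hA2 : A * A = 1) {ψ : Fin d → ℂ} (hψ : star ψ ⬝ᵥ ψ = 1) :
    expectation A ψ ^ 2 ≤ 1 := by
  have hswap : star (A *ᵥ ψ) ⬝ᵥ ψ = star ψ ⬝ᵥ (A *ᵥ ψ) := by
    rw [star_mulVec, hA.eq, dotProduct_mulVec]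
  have hAA : star (A *ᵥ ψ) ⬝ᵥ (A *ᵥ ψ) = 1 := by
    rw [star_mulVec, hA.eq, dotProduct_mulVec, vecMul_vecMul, hA2, vecMul_one, hψ]
  -- `‖ψ ± Aψ‖² = 2 ± 2⟨A⟩` is nonnegative
  have hplus := (Complex.nonneg_iff.1 (dotProduct_star_self_nonneg (ψ + A *ᵥ ψ))).1
  have hminus := (Complex.nonneg_iff.1 (dotProduct_star_self_nonneg (ψ - A *ᵥ ψ))).1
  rw [star_add, add_dotProduct, dotProduct_add, dotProduct_add, hswap, hAA, hψ] at hplus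
  rw [star_sub, sub_dotProduct, dotProduct_sub, dotProduct_sub, hswap, hAA, hψ] at hminus
  simp only [Complex.add_re, Complex.sub_re, Complex.one_re] at hplus hminus
  rw [sq_le_one_iff_abs_le_one, abs_le, expectation]
  constructor <;> linarith

lemma expectation_eq_one_or_neg_one {A : Matrix (Fin d) (Fin d) ℂ} {ψ : Fin d → ℂ}
    (hψ : star ψ ⬝ᵥ ψ = 1) (h : A *ᵥ ψ = ψ ∨ A *ᵥ ψ = -ψ) :
    expectation A ψ = 1 ∨ expectation A ψ = -1 := by
  rcases h with h | h
  · left; simp [expectation, h, hψ]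
  · right; simp [expectation, h, hψ]

end Expectation

section Beta

variable {ι : Type*} [Fintype ι] {d : ℕ} {S : ι → Matrix (Fin d) (Fin d) ℂ} {w : ι → ℝ}

lemma le_betaVal (hherm : ∀ i, (S i).IsHermitian) (hsq : ∀ i, S i * S i = 1)
    (hw : ∀ i, 0 ≤ w i) {ψ : Fin d → ℂ} (hψ : star ψ ⬝ᵥ ψ = 1) :
    ∑ i, w i * expectation (S i) ψ ^ 2 ≤ betaVal S w := by
  refine le_csSup ⟨∑ i, w i, ?_⟩ ⟨ψ, hψ, rfl⟩
  rintro _ ⟨φ, hφ, rfl⟩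
  exact Finset.sum_le_sum fun i _ =>
    mul_le_of_le_one_right (hw i) (expectation_sq_le_one (hherm i) (hsq i) hφ)

lemma betaVal_le (hd : 1 ≤ d) {c : ℝ}
    (h : ∀ ψ : Fin d → ℂ, star ψ ⬝ᵥ ψ = 1 → ∑ i, w i * expectation (S i) ψ ^ 2 ≤ c) :
    betaVal S w ≤ c := by
  refine csSup_le ⟨_, Pi.single ⟨0, hd⟩ 1, by simp, rfl⟩ ?_
  rintro _ ⟨ψ, hψ, rfl⟩
  exact h ψ hψ

lemma sum_le_betaVal_of_commute (hd : 1 ≤ d) (hherm : ∀ i, (S i).IsHermitian)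
    (hsq : ∀ i, S i * S i = 1) (hw : ∀ i, 0 ≤ w i) (I : Finset ι)
    (hcomm : ∀ i ∈ I, ∀ j ∈ I, S i * S j = S j * S i) :
    ∑ i ∈ I, w i ≤ betaVal S w := by
  have : Nonempty (Fin d) := ⟨⟨0, hd⟩⟩
  obtain ⟨φ, hφ, hev⟩ := exists_ne_zero_forall_mulVec_eq_or_eq_neg S I (fun i _ => hsq i) hcomm
  obtain ⟨c, hψ⟩ := exists_normalizing_smul hφ
  have hexp : ∀ i ∈ I, expectation (S i) (c • φ) ^ 2 = 1 := by
    intro i hi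
    have hev' : S i *ᵥ (c • φ) = c • φ ∨ S i *ᵥ (c • φ) = -(c • φ) := by
      rw [mulVec_smul, ← smul_neg]
      exact (hev i hi).imp (congrArg _) (congrArg _)
    rcases expectation_eq_one_or_neg_one hψ hev' with h | h <;> simp [h]
  calc ∑ i ∈ I, w i = ∑ i ∈ I, w i * expectation (S i) (c • φ) ^ 2 :=
        Finset.sum_congr rfl fun i hi => by rw [hexp i hi, mul_one]
    _ ≤ ∑ i, w i * expectation (S i) (c • φ) ^ 2 :=
        Finset.sum_le_sum_of_subset_of_nonneg I.subset_univ fun i _ _ =>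
          mul_nonneg (hw i) (sq_nonneg _)
    _ ≤ betaVal S w := le_betaVal hherm hsq hw hψ

lemma alphaW_le_betaVal {G : SimpleGraph ι} (hd : 1 ≤ d) (hS : IsRealization G d S)
    (hw : ∀ i, 0 ≤ w i) : alphaW G w ≤ betaVal S w := by
  obtain ⟨hherm, hsq, -, hcomm⟩ := hS
  refine csSup_le ⟨0, ∅, by simp [IsIndepSet], by simp⟩ ?_
  rintro _ ⟨I, hI, rfl⟩
  refine sum_le_betaVal_of_commute hd hherm hsq hw I fun i hi j hj => ?_
  rcases eq_or_ne i j with rfl | hij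
  · rfl
  · exact hcomm i j hij (hI i hi j hj)

end Beta

section Realization

variable {V n : Type*} [Fintype n] [DecidableEq n]

def IsRealizationOn (G : SimpleGraph V) (t : Set V) (T : V → Matrix n n ℂ) : Prop :=
  (∀ i ∈ t, (T i).IsHermitian) ∧ (∀ i ∈ t, T i * T i = 1) ∧
    (∀ i ∈ t, ∀ j ∈ t, G.Adj i j → T i * T j = -(T j * T i)) ∧
    (∀ i ∈ t, ∀ j ∈ t, i ≠ j → ¬G.Adj i j → T i * T j = T j * T i)

lemma isRealizationOn_univ_iff {G : SimpleGraph V} {d : ℕ} {T : V → Matrix (Fin d) (Fin d) ℂ} :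
    IsRealizationOn G Set.univ T ↔ IsRealization G d T := by
  simp [IsRealizationOn, IsRealization]

lemma IsRealization.isRealizationOn_extend {G : SimpleGraph V} {s : Set V}
    [DecidablePred (· ∈ s)] {d : ℕ} {S : s → Matrix (Fin d) (Fin d) ℂ}
    (hS : IsRealization (G.induce s) d S) :
    IsRealizationOn G s (fun v => if h : v ∈ s then S ⟨v, h⟩ else 1) := by
  obtain ⟨hherm, hsq, hanti, hcomm⟩ := hS
  refine ⟨fun i hi => ?_, fun i hi => ?_, fun i hi j hj hij => ?_, fun i hi j hj hij hnij => ?_⟩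
  all_goals simp only [dif_pos hi]
  · exact hherm _
  · exact hsq _
  · simp only [dif_pos hj]
    exact hanti ⟨i, hi⟩ ⟨j, hj⟩ hij
  · simp only [dif_pos hj]
    exact hcomm ⟨i, hi⟩ ⟨j, hj⟩ (fun h => hij (congrArg Subtype.val h)) hnij

lemma IsRealizationOn.reindex {m : Type*} [Fintype m] [DecidableEq m] {G : SimpleGraph V}
    {t : Set V} {T : V → Matrix n n ℂ} (hT : IsRealizationOn G t T) (e : n ≃ m) :
    IsRealizationOn G t (fun v => reindex e e (T v)) := by
  obtain ⟨hherm, hsq, hanti, hcomm⟩ := hT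
  simp only [IsRealizationOn, reindex_apply, submatrix_mul_equiv]
  refine ⟨fun i hi => (hherm i hi).submatrix _, fun i hi => ?_, fun i hi j hj hij => ?_,
    fun i hi j hj hij hnij => ?_⟩
  · rw [hsq i hi, submatrix_one_equiv]
  · rw [hanti i hi j hj hij]
    rfl
  · rw [hcomm i hi j hj hij hnij]

end Realization

section AdjoinVertex

variable {V n : Type*} [DecidableEq n] [DecidableEq V] (G : SimpleGraph V) [DecidableRel G.Adj]

def adjoinVertex (u : V) (T : V → Matrix n n ℂ) (v : V) : Matrix (n × Fin 2) (n × Fin 2) ℂ :=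
  if v = u then 1 ⊗ₖ pauliX else T v ⊗ₖ if G.Adj v u then pauliZ else 1

variable {G}

lemma adjoinVertex_self (u : V) (T : V → Matrix n n ℂ) :
    adjoinVertex G u T u = 1 ⊗ₖ pauliX :=
  if_pos rfl

lemma adjoinVertex_of_ne {u v : V} (T : V → Matrix n n ℂ) (h : v ≠ u) :
    adjoinVertex G u T v = T v ⊗ₖ if G.Adj v u then pauliZ else 1 :=
  if_neg h

lemma IsRealizationOn.insert_adjoinVertex [Fintype n] {t : Set V} {T : V → Matrix n n ℂ}
    (hT : IsRealizationOn G t T) (u : V) :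
    IsRealizationOn G (insert u t) (adjoinVertex G u T) := by
  obtain ⟨hherm, hsq, hanti, hcomm⟩ := hT
  have mem {i} (hi : i ∈ insert u t) (hiu : i ≠ u) : i ∈ t := hi.resolve_left hiu
  refine ⟨fun i hi => ?_, fun i hi => ?_, fun i hi j hj hij => ?_, fun i hi j hj hij hnij => ?_⟩
  · unfold adjoinVertex
    split_ifs with hiu
    · exact isHermitian_one.kronecker isHermitian_pauliX
    · exact (hherm i (mem hi hiu)).kronecker isHermitian_pauliZ
    · exact (hherm i (mem hi hiu)).kronecker isHermitian_one
  · unfold adjoinVertex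
    split_ifs with hiu
    · rw [← mul_kronecker_mul, one_mul, pauliX_mul_self, one_kronecker_one]
    · rw [← mul_kronecker_mul, hsq i (mem hi hiu), pauliZ_mul_self, one_kronecker_one]
    · rw [← mul_kronecker_mul, hsq i (mem hi hiu), one_mul, one_kronecker_one]
  · rcases eq_or_ne i u with rfl | hiu
    · rw [adjoinVertex_self, adjoinVertex_of_ne T (G.ne_of_adj hij).symm, if_pos hij.symm,
        ← mul_kronecker_mul, ← mul_kronecker_mul, one_mul, mul_one, pauliZ_mul_pauliX,
        kronecker_neg, neg_neg]
    rcases eq_or_ne j u with rfl | hju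
    · rw [adjoinVertex_self, adjoinVertex_of_ne T hiu, if_pos hij, ← mul_kronecker_mul,
        ← mul_kronecker_mul, one_mul, mul_one, pauliZ_mul_pauliX, kronecker_neg]
    · rw [adjoinVertex_of_ne T hiu, adjoinVertex_of_ne T hju, ← mul_kronecker_mul,
        ← mul_kronecker_mul, hanti i (mem hi hiu) j (mem hj hju) hij, neg_kronecker,
        (commute_ite_pauliZ _ _).eq]
  · rcases eq_or_ne i u with rfl | hiu
    · rw [adjoinVertex_self, adjoinVertex_of_ne T hij.symm, if_neg fun h => hnij h.symm,
        ← mul_kronecker_mul, ← mul_kronecker_mul, one_mul, mul_one, mul_one, one_mul]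
    rcases eq_or_ne j u with rfl | hju
    · rw [adjoinVertex_self, adjoinVertex_of_ne T hiu, if_neg hnij, ← mul_kronecker_mul,
        ← mul_kronecker_mul, one_mul, mul_one, mul_one, one_mul]
    · rw [adjoinVertex_of_ne T hiu, adjoinVertex_of_ne T hju, ← mul_kronecker_mul,
        ← mul_kronecker_mul, hcomm i (mem hi hiu) j (mem hj hju) hij hnij,
        (commute_ite_pauliZ _ _).eq]

end AdjoinVertex

section Extension

variable {V : Type*} {G : SimpleGraph V} {d : ℕ}

lemma exists_expectation_adjoinVertex_eq [DecidableEq V] [DecidableRel G.Adj] (u : V)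
    (T : V → Matrix (Fin d) (Fin d) ℂ) {ψ : Fin d → ℂ} (hψ : star ψ ⬝ᵥ ψ = 1) :
    ∃ ψ' : Fin (d * 2) → ℂ, star ψ' ⬝ᵥ ψ' = 1 ∧ ∀ v ≠ u,
      expectation (reindex finProdFinEquiv finProdFinEquiv (adjoinVertex G u T v)) ψ' =
        expectation (T v) ψ := by
  set e₀ : Fin 2 → ℂ := Pi.single 0 1
  have key (A : Matrix (Fin d) (Fin d) ℂ) (B : Matrix (Fin 2) (Fin 2) ℂ) :
      star ((fun x => ψ x.1 * e₀ x.2) ∘ finProdFinEquiv.symm) ⬝ᵥ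
        (reindex finProdFinEquiv finProdFinEquiv (A ⊗ₖ B) *ᵥ
          ((fun x => ψ x.1 * e₀ x.2) ∘ finProdFinEquiv.symm)) =
        (star ψ ⬝ᵥ (A *ᵥ ψ)) * (star e₀ ⬝ᵥ (B *ᵥ e₀)) := by
    rw [star_dotProduct_reindex_mulVec, star_dotProduct_kronecker_mulVec]
  refine ⟨(fun x => ψ x.1 * e₀ x.2) ∘ finProdFinEquiv.symm, ?_, fun v hv => ?_⟩
  · simpa [one_kronecker_one, hψ, e₀] using key 1 1
  · rw [expectation, adjoinVertex_of_ne T hv, key]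
    split_ifs <;> simp [e₀, pauliZ, expectation]

lemma IsRealizationOn.exists_union {s : Set V} {S : V → Matrix (Fin d) (Fin d) ℂ}
    (hS : IsRealizationOn G s S) (hd : 1 ≤ d) (F : Finset V) :
    ∃ D, 1 ≤ D ∧ ∃ T : V → Matrix (Fin D) (Fin D) ℂ, IsRealizationOn G (s ∪ F) T ∧
      ∀ ψ, star ψ ⬝ᵥ ψ = 1 → ∃ ψ', star ψ' ⬝ᵥ ψ' = 1 ∧
        ∀ v ∈ s, expectation (T v) ψ' = expectation (S v) ψ := by
  classical
  induction F using Finset.induction with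
  | empty => exact ⟨d, hd, S, by simpa using hS, fun ψ hψ => ⟨ψ, hψ, fun _ _ => rfl⟩⟩
  | @insert u F _ IH =>
    obtain ⟨D, hD, T, hT, hTS⟩ := IH
    rw [Finset.coe_insert, Set.union_insert]
    by_cases hu : u ∈ s
    · rw [Set.insert_eq_of_mem (Set.mem_union_left _ hu)]
      exact ⟨D, hD, T, hT, hTS⟩
    refine ⟨D * 2, by omega,
      fun v => Matrix.reindex finProdFinEquiv finProdFinEquiv (adjoinVertex G u T v),
      (hT.insert_adjoinVertex u).reindex finProdFinEquiv, fun ψ hψ => ?_⟩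
    obtain ⟨φ, hφ, hTφ⟩ := hTS ψ hψ
    obtain ⟨φ', hφ', hφφ'⟩ := exists_expectation_adjoinVertex_eq (G := G) u T hφ
    exact ⟨φ', hφ', fun v hv => (hφφ' v (ne_of_mem_of_not_mem hv hu)).trans (hTφ v hv)⟩

lemma IsRealization.exists_isRealization_of_induce [Fintype V] {s : Set V}
    [DecidablePred (· ∈ s)] {S : s → Matrix (Fin d) (Fin d) ℂ}
    (hS : IsRealization (G.induce s) d S) (hd : 1 ≤ d) :
    ∃ D, 1 ≤ D ∧ ∃ T : V → Matrix (Fin D) (Fin D) ℂ, IsRealization G D T ∧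
      ∀ ψ, star ψ ⬝ᵥ ψ = 1 → ∃ ψ', star ψ' ⬝ᵥ ψ' = 1 ∧
        ∀ v : s, expectation (T v) ψ' = expectation (S v) ψ := by
  obtain ⟨D, hD, T, hT, hTS⟩ := hS.isRealizationOn_extend.exists_union hd Finset.univ
  rw [Finset.coe_univ, Set.union_univ, isRealizationOn_univ_iff] at hT
  refine ⟨D, hD, T, hT, fun ψ hψ => ?_⟩
  obtain ⟨ψ', hψ', h⟩ := hTS ψ hψ
  exact ⟨ψ', hψ', fun v => by simpa using h v v.2⟩

end Extension

lemma alphaW_induce {V : Type*} [Fintype V] (G : SimpleGraph V) (s : Set V)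
    [DecidablePred (· ∈ s)] (w : s → ℝ) :
    alphaW (G.induce s) w = alphaW G fun v => if h : v ∈ s then w ⟨v, h⟩ else 0 := by
  unfold alphaW
  congr 1
  ext r
  constructor
  · rintro ⟨I, hI, rfl⟩
    refine ⟨I.map (Function.Embedding.subtype _), fun a ha b hb hab => ?_, by simp⟩
    obtain ⟨i, hi, rfl⟩ := Finset.mem_map.1 ha
    obtain ⟨j, hj, rfl⟩ := Finset.mem_map.1 hb
    exact hI i hi j hj hab
  · rintro ⟨J, hJ, rfl⟩
    refine ⟨J.subtype (· ∈ s), fun a ha b hb hab =>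
      hJ _ (Finset.mem_subtype.1 ha) _ (Finset.mem_subtype.1 hb) hab, ?_⟩
    rw [← Finset.sum_filter_of_ne fun v _ h => not_not.1 fun hv => h (dif_neg hv),
      ← Finset.subtype_map, Finset.sum_map]
    exact Finset.sum_congr rfl fun i _ => dif_pos i.2

lemma Fintype.sum_subtype_eq_sum_dite {V M : Type*} [Fintype V] [AddCommMonoid M] (s : Set V)
    [DecidablePred (· ∈ s)] (f : s → M) :
    ∑ i, f i = ∑ v, if h : v ∈ s then f ⟨v, h⟩ else 0 := by
  have hout : ∑ i : {v // v ∉ s}, (if h : ↑i ∈ s then f ⟨i, h⟩ else 0) = 0 :=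
    Finset.sum_eq_zero fun i _ => dif_neg i.2
  rw [← Fintype.sum_subtype_add_sum_subtype (· ∈ s), hout, add_zero]
  exact Finset.sum_congr rfl fun i _ => by rw [dif_pos i.2]

/-- Any induced subgraph of an ħ-perfect graph is ħ-perfect. -/
theorem stmt_4 {V : Type*} [Fintype V] (G : SimpleGraph V) (s : Set V)
    [DecidablePred (· ∈ s)] (hG : HbarPerfect G) :
    HbarPerfect (SimpleGraph.induce s G) := by
  intro d hd S hS w hw
  obtain ⟨D, hD, T, hT, hTS⟩ := hS.exists_isRealization_of_induce hd
  set w' : V → ℝ := fun v => if h : v ∈ s then w ⟨v, h⟩ else 0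
  have hw' (v : V) : 0 ≤ w' v := by
    by_cases h : v ∈ s <;> simp [w', h, hw]
  refine le_antisymm ?_ (alphaW_le_betaVal hd hS hw)
  calc betaVal S w ≤ betaVal T w' := betaVal_le hd fun ψ hψ => by
        obtain ⟨ψ', hψ', hexp⟩ := hTS ψ hψ
        calc ∑ i, w i * expectation (S i) ψ ^ 2
            = ∑ v, w' v * expectation (T v) ψ' ^ 2 := by
              rw [Fintype.sum_subtype_eq_sum_dite]
              refine Finset.sum_congr rfl fun v _ => ?_
              by_cases h : v ∈ s <;> simp [w', h, ← hexp]
          _ ≤ betaVal T w' := le_betaVal hT.1 hT.2.1 hw' hψ'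
    _ = alphaW G w' := hG D hD T hT w' hw'
    _ = alphaW (G.induce s) w := (alphaW_induce G s w).symm
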